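/- arXiv:math/0208182 — 9 statements merged into one kernel-verified Lean document; each statement's English description precedes it below -/
import Mathlib

section
/- Let X be a topological space and (F_n) a decreasing sequence of nonempty closed subsets of X such that every filter containing all the F_n has a cluster point. Then the intersection ⋂_n F_n is compact. -/
open Filter

theorem ClusterPt.mem_iInter_of_isClosed {ι X : Type*} [TopologicalSpace X] {F : ι → Set X}
    {f : Filter X} {x : X} (hx : ClusterPt x f) (hcl : ∀ i, IsClosed (F i))
    (hF : ∀ i, F i ∈ f) : x ∈ ⋂ i, F i :=
  Set.mem_iInter.mpr fun i => (hcl i).closure_eq ▸ hx.mem_closure_of_mem (F i) (hF i)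

theorem isCompact_iInter_of_forall_clusterPt {ι X : Type*} [TopologicalSpace X]
    {F : ι → Set X} (hcl : ∀ i, IsClosed (F i))
    (h : ∀ f : Filter X, f ≠ ⊥ → (∀ i, F i ∈ f) → ∃ x, ClusterPt x f) :
    IsCompact (⋂ i, F i) := by
  intro f hf hle
  have hF : ∀ i, F i ∈ f := fun i =>
    mem_of_superset (le_principal_iff.mp hle) (Set.iInter_subset F i)
  obtain ⟨x, hx⟩ := h f hf.ne hF
  exact ⟨x, hx.mem_iInter_of_isClosed hcl hF, hx⟩

theorem stmt_0_general {X : Type*} [TopologicalSpace X] (F : ℕ → Set X)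
    (hcl : ∀ n, IsClosed (F n))
    (h : ∀ f : Filter X, f ≠ ⊥ → (∀ n, F n ∈ f) → ∃ x, ClusterPt x f) :
    IsCompact (⋂ n, F n) :=
  isCompact_iInter_of_forall_clusterPt hcl h

theorem stmt_0 {X : Type*} [TopologicalSpace X] (F : ℕ → Set X)
    (hne : ∀ n, (F n).Nonempty) (hcl : ∀ n, IsClosed (F n))
    (hdec : ∀ n, F (n + 1) ⊆ F n)
    (h : ∀ f : Filter X, f ≠ ⊥ → (∀ n, F n ∈ f) → ∃ x, ClusterPt x f) :
    IsCompact (⋂ n, F n) :=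
  stmt_0_general F hcl h
end

section
/- If (B_n)_{n∈ℕ} is a family of nonempty basic sets in a product X = ∏_{i∈I} X i of nonempty topological spaces such that the support sets I(B_n) are pairwise disjoint, then the union ⋃_n B_n is dense in X. -/
/-- A *basic set* in a product `∀ i, X i`: a finite intersection of
coordinate preimages. -/
def IsBasicSet {I : Type*} {X : I → Type*} (B : Set (∀ i, X i)) : Prop :=
  ∃ (F : Finset I) (S : ∀ i, Set (X i)),
    B = ⋂ i ∈ F, (fun x => x i) ⁻¹' (S i)

/-- The projection of a subset of the product onto the `i`-th coordinate. -/
def bproj {I : Type*} {X : I → Type*} (i : I) (B : Set (∀ i, X i)) : Set (X i) :=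
  (fun x => x i) '' B

/-- The support `I(B)` of a subset of the product: the set of coordinates where
it is properly constrained. -/
def bsupp {I : Type*} {X : I → Type*} (B : Set (∀ i, X i)) : Set I :=
  {i | bproj i B ≠ Set.univ}

/-! A nonempty basic set `B` meets every nonempty box whose coordinates avoid its support `I(B)`:
take a point of `B` on `I(B)` and a point of the box elsewhere. Since the supports of the `B n`
are pairwise disjoint, only finitely many of them meet the finite set of coordinates that a basic
open box constrains, so some `B n` meets that box. -/

open Set

namespace IsBasicSet

variable {I : Type*} {X : I → Type*} {B : Set (∀ i, X i)}

theorem mem_of_forall_mem_bproj (hB : IsBasicSet B) {z : ∀ i, X i}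
    (hz : ∀ i, z i ∈ bproj i B) : z ∈ B := by
  obtain ⟨F, S, rfl⟩ := hB
  refine mem_iInter₂.2 fun i hi => ?_
  obtain ⟨u, hu, hui⟩ := hz i
  show z i ∈ S i
  exact hui ▸ mem_iInter₂.1 hu i hi

theorem piecewise_bsupp_mem (hB : IsBasicSet B) {y : ∀ i, X i} (hy : y ∈ B)
    (x : ∀ i, X i) [∀ i, Decidable (i ∈ bsupp B)] : (bsupp B).piecewise y x ∈ B := by
  refine hB.mem_of_forall_mem_bproj fun i => ?_
  by_cases hi : i ∈ bsupp B
  · rw [piecewise_eq_of_mem _ _ _ hi]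
    exact mem_image_of_mem _ hy
  · rw [show bproj i B = univ from not_not.1 hi]
    exact mem_univ _

theorem inter_pi_nonempty (hB : IsBasicSet B) (hne : B.Nonempty) {s : Set I}
    (hs : Disjoint (bsupp B) s) {U : ∀ i, Set (X i)} (hU : (s.pi U).Nonempty) :
    (B ∩ s.pi U).Nonempty := by
  classical
  obtain ⟨y, hy⟩ := hne
  obtain ⟨x, hx⟩ := hU
  refine ⟨(bsupp B).piecewise y x, hB.piecewise_bsupp_mem hy x, fun i hi => ?_⟩
  rw [piecewise_eq_of_notMem _ _ _ (disjoint_right.1 hs hi)]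
  exact hx i hi

end IsBasicSet

theorem Set.Finite.setOf_inter_nonempty_of_pairwise_disjoint {ι α : Type*} {s : ι → Set α}
    (hs : Pairwise fun m n => Disjoint (s m) (s n)) {F : Set α} (hF : F.Finite) :
    {n | (s n ∩ F).Nonempty}.Finite := by
  have hsub : {n | (s n ∩ F).Nonempty} ⊆ ⋃ i ∈ F, {n | i ∈ s n} :=
    fun n ⟨i, his, hiF⟩ => mem_biUnion hiF his
  refine (hF.biUnion fun i _ => Subsingleton.finite fun m hm n hn => ?_).subset hsub
  by_contra hmn
  exact disjoint_left.1 (hs hmn) hm hn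

theorem stmt_3_general {I : Type*} {X : I → Type*} [∀ i, TopologicalSpace (X i)]
    (B : ℕ → Set (∀ i, X i)) (hb : ∀ n, IsBasicSet (B n))
    (hne : ∀ n, (B n).Nonempty)
    (hdisj : Pairwise fun m n => Disjoint (bsupp (B m)) (bsupp (B n))) :
    Dense (⋃ n, B n) := by
  rw [(isTopologicalBasis_pi fun i => TopologicalSpace.isTopologicalBasis_opens).dense_iff]
  rintro _ ⟨U, F, -, rfl⟩ hU
  obtain ⟨n, hn⟩ : {n | (bsupp (B n) ∩ F).Nonempty}ᶜ.Nonempty :=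
    (F.finite_toSet.setOf_inter_nonempty_of_pairwise_disjoint hdisj).infinite_compl.nonempty
  have hnF : Disjoint (bsupp (B n)) F :=
    disjoint_iff_inter_eq_empty.2 (not_nonempty_iff_eq_empty.1 hn)
  obtain ⟨z, hzB, hzU⟩ := (hb n).inter_pi_nonempty (hne n) hnF hU
  exact ⟨z, hzU, mem_iUnion_of_mem n hzB⟩

theorem stmt_3 {I : Type*} {X : I → Type*} [∀ i, TopologicalSpace (X i)]
    [∀ i, Nonempty (X i)]
    (B : ℕ → Set (∀ i, X i)) (hb : ∀ n, IsBasicSet (B n))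
    (hne : ∀ n, (B n).Nonempty)
    (hdisj : Pairwise fun m n => Disjoint (bsupp (B m)) (bsupp (B n))) :
    Dense (⋃ n, B n) :=
  stmt_3_general B hb hne hdisj
end

section
/- Let G be an open subset and R a regular open subset of a product X = ∏_{i∈I} X i of nonempty topological spaces. Suppose there exist a set E ⊆ I and a sequence (B_n) of nonempty basic subsets of R such that π_E(B_n) ⊇ π_E(G) for all n, and the sets I(B_n) \ E are pairwise disjoint. Then G ⊆ R. -/
/-- Restriction of a point of the product to the coordinates in `E`. -/
def restr {I : Type*} {X : I → Type*} (E : Set I) (x : ∀ i, X i) : ∀ i : E, X i.1 :=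
  fun i => x i.1

open Set Function

theorem Set.Finite.setOf_not_disjoint_of_pairwise_disjoint {ι α : Type*} {f : ι → Set α}
    (hf : Pairwise (Disjoint on f)) {s : Set α} (hs : s.Finite) :
    {n | ¬ Disjoint (f n) s}.Finite := by
  refine Finite.subset (s := ⋃ a ∈ s, {n | a ∈ f n})
    (hs.biUnion fun a _ => Subsingleton.finite ?_) ?_
  · intro m hm n hn
    by_contra hmn
    exact disjoint_left.mp (hf hmn) hm hn
  · intro n hn
    obtain ⟨a, han, has⟩ := not_disjoint_iff.mp hn
    exact mem_biUnion has han

theorem exists_disjoint_of_pairwise_disjoint {ι α : Type*} [Infinite ι] {f : ι → Set α}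
    (hf : Pairwise (Disjoint on f)) {s : Set α} (hs : s.Finite) :
    ∃ n, Disjoint (f n) s := by
  obtain ⟨n, hn⟩ := (hs.setOf_not_disjoint_of_pairwise_disjoint hf).infinite_compl.nonempty
  exact ⟨n, not_not.mp hn⟩

section Product

variable {I : Type*} {X : I → Type*}

theorem mem_closure_pi_of_forall_finset_exists_eq [∀ i, TopologicalSpace (X i)]
    {S : Set (∀ i, X i)} {x : ∀ i, X i}
    (h : ∀ F : Finset I, ∃ z ∈ S, ∀ i ∈ F, z i = x i) : x ∈ closure S := by
  refine mem_closure_iff.mpr fun o ho hxo => ?_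
  obtain ⟨F, u, hu, hFu⟩ := isOpen_pi_iff.mp ho x hxo
  obtain ⟨z, hzS, hzx⟩ := h F
  exact ⟨z, hFu fun i hi => (hzx i hi).symm ▸ (hu i hi).2, hzS⟩

theorem IsBasicSet.mem_of_forall_mem_bsupp_eq {B : Set (∀ i, X i)} (hB : IsBasicSet B)
    {y z : ∀ i, X i} (hy : y ∈ B) (hzy : ∀ i ∈ bsupp B, z i = y i) : z ∈ B := by
  obtain ⟨F, S, rfl⟩ := hB
  refine mem_iInter₂.mpr fun i hi => ?_
  by_cases hiB : i ∈ bsupp (⋂ i ∈ F, (fun x => x i) ⁻¹' S i)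
  · exact show z i ∈ S i from (hzy i hiB).symm ▸ mem_iInter₂.mp hy i hi
  · -- `bproj i B = univ`, so `z i` is the `i`-th coordinate of some point of `B`
    obtain ⟨b, hb, hbz⟩ : z i ∈ bproj i (⋂ i ∈ F, (fun x => x i) ⁻¹' S i) := by
      rw [not_not.mp hiB]
      trivial
    exact show z i ∈ S i from hbz ▸ mem_iInter₂.mp hb i hi

theorem mem_closure_iUnion_of_restr_mem [∀ i, TopologicalSpace (X i)] {ι : Type*} [Infinite ι]
    {E : Set I} {B : ι → Set (∀ i, X i)} (hb : ∀ n, IsBasicSet (B n))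
    (hdisj : Pairwise fun m n => Disjoint (bsupp (B m) \ E) (bsupp (B n) \ E))
    {x : ∀ i, X i} (hx : ∀ n, restr E x ∈ restr E '' B n) : x ∈ closure (⋃ n, B n) := by
  classical
  refine mem_closure_pi_of_forall_finset_exists_eq fun F => ?_
  obtain ⟨n, hn⟩ := exists_disjoint_of_pairwise_disjoint hdisj F.finite_toSet
  obtain ⟨y, hyB, hyx⟩ := hx n
  have hxy : ∀ i ∈ E, x i = y i := fun i hi => (congrFun hyx ⟨i, hi⟩).symm
  refine ⟨(E ∪ ↑F).piecewise x y,
    mem_iUnion_of_mem n ((hb n).mem_of_forall_mem_bsupp_eq hyB ?_),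
    fun i hi => piecewise_eq_of_mem _ _ _ (Or.inr hi)⟩
  intro i hi
  by_cases hiE : i ∈ E
  · rw [piecewise_eq_of_mem _ _ _ (mem_union_left _ hiE), hxy i hiE]
  · have hiF : i ∉ (F : Set I) := disjoint_left.mp hn ⟨hi, hiE⟩
    exact piecewise_eq_of_notMem _ _ _ fun h => h.elim hiE hiF

end Product

theorem stmt_4_general {I : Type*} {X : I → Type*} [∀ i, TopologicalSpace (X i)]
    (G R : Set (∀ i, X i)) (hG : IsOpen G) (hR : R = interior (closure R))
    (E : Set I) (B : ℕ → Set (∀ i, X i))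
    (hb : ∀ n, IsBasicSet (B n))
    (hBR : ∀ n, B n ⊆ R)
    (hproj : ∀ n, restr E '' G ⊆ restr E '' B n)
    (hdisj : Pairwise fun m n => Disjoint (bsupp (B m) \ E) (bsupp (B n) \ E)) :
    G ⊆ R := by
  have hG_closure : G ⊆ closure R := fun x hx =>
    closure_mono (iUnion_subset hBR)
      (mem_closure_iUnion_of_restr_mem hb hdisj fun n => hproj n (mem_image_of_mem _ hx))
  calc G = interior G := hG.interior_eq.symm
    _ ⊆ interior (closure R) := interior_mono hG_closure
    _ = R := hR.symm

theorem stmt_4 {I : Type*} {X : I → Type*} [∀ i, TopologicalSpace (X i)]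
    [∀ i, Nonempty (X i)]
    (G R : Set (∀ i, X i)) (hG : IsOpen G) (hR : R = interior (closure R))
    (E : Set I) (B : ℕ → Set (∀ i, X i))
    (hb : ∀ n, IsBasicSet (B n)) (hne : ∀ n, (B n).Nonempty)
    (hBR : ∀ n, B n ⊆ R)
    (hproj : ∀ n, restr E '' G ⊆ restr E '' B n)
    (hdisj : Pairwise fun m n => Disjoint (bsupp (B m) \ E) (bsupp (B n) \ E)) :
    G ⊆ R :=
  stmt_4_general G R hG hR E B hb hBR hproj hdisj
end

section
/- Let R be a regular open proper subset of a product X = ∏_{i∈I} X i of nonempty topological spaces. Then there is a finite set F ⊆ I such that F ∩ I(B) ≠ ∅ for every nonempty basic set B contained in R. -/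
/-!
Pick a point `x` outside `closure R` (it exists because `R` is regular open and proper) and a
basic neighbourhood `∏_{i ∈ F} u i` of `x` missing `R`. A basic set `B` with `F ∩ I(B) = ∅`
puts no constraint on the coordinates in `F`, so changing the coordinates of a point of `B`
in `F` to those of `x` stays in `B` while landing in that neighbourhood; hence `B ⊄ R`.
-/

open Set

theorem closure_ne_univ_of_eq_interior_closure {α : Type*} [TopologicalSpace α] {R : Set α}
    (hR : R = interior (closure R)) (hne : R ≠ univ) : closure R ≠ univ := by
  intro h
  rw [h, interior_univ] at hR
  exact hne hR

theorem IsBasicSet.eq_pi {I : Type*} {X : I → Type*} {B : Set (∀ i, X i)} (hB : IsBasicSet B) :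
    ∃ (G : Finset I) (S : ∀ i, Set (X i)), B = (G : Set I).pi S := by
  obtain ⟨G, S, rfl⟩ := hB
  exact ⟨G, S, by ext; simp [Set.pi]⟩

theorem IsBasicSet.piecewise_mem {I : Type*} {X : I → Type*} [DecidableEq I]
    {B : Set (∀ i, X i)} (hB : IsBasicSet B) {b : ∀ i, X i} (hb : b ∈ B) {F : Finset I}
    (hF : Disjoint (F : Set I) (bsupp B)) (x : ∀ i, X i) : F.piecewise x b ∈ B := by
  obtain ⟨G, S, rfl⟩ := hB.eq_pi
  intro j hj
  by_cases hjF : j ∈ F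
  · have hproj : bproj j ((G : Set I).pi S) = univ := by
      by_contra h
      exact hF.notMem_of_mem_left (Finset.mem_coe.mpr hjF) h
    obtain ⟨c, hc, hcx⟩ : x j ∈ bproj j ((G : Set I).pi S) := hproj ▸ mem_univ _
    rw [Finset.piecewise_eq_of_mem _ _ _ hjF, ← hcx]
    exact hc j hj
  · rw [Finset.piecewise_eq_of_notMem _ _ _ hjF]
    exact hb j hj

theorem stmt_5_general {I : Type*} {X : I → Type*} [∀ i, TopologicalSpace (X i)]
    (R : Set (∀ i, X i)) (hR : R = interior (closure R)) (hRproper : R ≠ Set.univ) :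
    ∃ F : Finset I, ∀ B : Set (∀ i, X i),
      IsBasicSet B → B.Nonempty → B ⊆ R → ((F : Set I) ∩ bsupp B).Nonempty := by
  classical
  obtain ⟨x, hx⟩ := (ne_univ_iff_exists_notMem _).mp
    (closure_ne_univ_of_eq_interior_closure hR hRproper)
  obtain ⟨F, u, hxu, hFu⟩ := isOpen_pi_iff.mp isClosed_closure.isOpen_compl x hx
  refine ⟨F, fun B hB ⟨b, hb⟩ hBR => ?_⟩
  rw [← not_disjoint_iff_nonempty_inter]
  intro hF
  have hyB := hB.piecewise_mem hb hF x
  have hyu : F.piecewise x b ∈ (F : Set I).pi u := fun i hi => by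
    rw [Finset.piecewise_eq_of_mem _ _ _ hi]
    exact (hxu i hi).2
  exact hFu hyu (subset_closure (hBR hyB))

theorem stmt_5 {I : Type*} {X : I → Type*} [∀ i, TopologicalSpace (X i)]
    [∀ i, Nonempty (X i)]
    (R : Set (∀ i, X i)) (hR : R = interior (closure R)) (hRproper : R ≠ Set.univ) :
    ∃ F : Finset I, ∀ B : Set (∀ i, X i),
      IsBasicSet B → B.Nonempty → B ⊆ R → ((F : Set I) ∩ bsupp B).Nonempty :=
  stmt_5_general R hR hRproper
end

section
/- Let G, R be open subsets of a product X = ∏_{i∈I} X i of nonempty topological spaces with G not contained in interior (closure R), and let E ⊆ I be finite. Then there exists a finite set F ⊆ I such that for every finite family 𝓑 of nonempty basic open subsets of R with π_E(⋃ 𝓑) ⊇ π_E(G), one has (F ∩ ⋃_{B∈𝓑} I(B)) \ E ≠ ∅. -/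
/-- A *basic open set* in a product of topological spaces: a finite intersection
of preimages of open coordinate sets. -/
def IsBasicOpen {I : Type*} {X : I → Type*} [∀ i, TopologicalSpace (X i)]
    (B : Set (∀ i, X i)) : Prop :=
  ∃ (F : Finset I) (S : ∀ i, Set (X i)), (∀ i, IsOpen (S i)) ∧
    B = ⋂ i ∈ F, (fun x => x i) ⁻¹' (S i)

/-!
Since `G` is open and not contained in `closure R`, some `z ∈ G` has a basic neighbourhood
`∏_{i ∈ K} U i` missing `R`; take `F := K`. If a cover `𝓑` violated the conclusion, pick
`y ∈ B ∈ 𝓑` agreeing with `z` on `E`. Membership in the basic set `B` only depends on the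
coordinates in `bsupp B`, which avoid `K \ E`, so the point equal to `z` on `K \ E` and to `y`
elsewhere lies both in `B ⊆ R` and in the neighbourhood of `z`, a contradiction.
-/

open Set Filter Topology

section

variable {I : Type*} {X : I → Type*}

lemma restr_eq_restr_iff {E : Set I} {x y : ∀ i, X i} :
    restr E x = restr E y ↔ ∀ i ∈ E, x i = y i :=
  ⟨fun h i hi => congrFun h ⟨i, hi⟩, fun h => funext fun i => h i i.2⟩

lemma IsBasicOpen.isBasicSet [∀ i, TopologicalSpace (X i)] {B : Set (∀ i, X i)}
    (hB : IsBasicOpen B) : IsBasicSet B :=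
  let ⟨F, S, _, hFS⟩ := hB
  ⟨F, S, hFS⟩

/-- Off its support, each defining factor `S i` of a basic set contains its whole projection,
hence is everything. -/
lemma IsBasicSet.mem_of_eqOn_bsupp {B : Set (∀ i, X i)} (hB : IsBasicSet B)
    {y w : ∀ i, X i} (hy : y ∈ B) (hwy : ∀ i ∈ bsupp B, w i = y i) : w ∈ B := by
  obtain ⟨F, S, hBFS⟩ := hB
  have hyS : ∀ i ∈ F, y i ∈ S i := mem_iInter₂.mp (hBFS ▸ hy)
  rw [hBFS]
  refine mem_iInter₂.mpr fun i hi => ?_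
  by_cases hsupp : i ∈ bsupp B
  · rw [mem_preimage, hwy i hsupp]
    exact hyS i hi
  · have hproj : bproj i B ⊆ S i := by
      rintro _ ⟨x, hx, rfl⟩
      exact mem_iInter₂.mp (hBFS ▸ hx) i hi
    rw [bsupp, mem_ofPred_eq, not_not] at hsupp
    exact hproj (hsupp ▸ mem_univ (w i))

lemma IsBasicSet.pi_inter_nonempty {B : Set (∀ i, X i)} (hB : IsBasicSet B)
    {K E : Set I} {U : ∀ i, Set (X i)} {y z : ∀ i, X i} (hy : y ∈ B) (hz : z ∈ K.pi U)
    (hyz : ∀ i ∈ E, y i = z i) (hK : K ∩ bsupp B ⊆ E) : (K.pi U ∩ B).Nonempty := by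
  classical
  refine ⟨(K \ E).piecewise z y, fun i hi => ?_, hB.mem_of_eqOn_bsupp hy fun i hi => ?_⟩
  · by_cases hiE : i ∈ E
    · rw [piecewise_eq_of_notMem _ _ _ fun h => h.2 hiE, hyz i hiE]
      exact hz i hi
    · rw [piecewise_eq_of_mem _ _ _ (show i ∈ K \ E from ⟨hi, hiE⟩)]
      exact hz i hi
  · exact piecewise_eq_of_notMem _ _ _ fun h =>
      h.2 (hK (show i ∈ K ∩ bsupp B from ⟨h.1, hi⟩))

lemma exists_mem_notMem_closure_of_not_subset_interior_closure {Y : Type*}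
    [TopologicalSpace Y] {G R : Set Y} (hG : IsOpen G) (hGR : ¬ G ⊆ interior (closure R)) :
    ∃ z ∈ G, z ∉ closure R :=
  not_subset.mp (hG.subset_interior_iff.not.mp hGR)

lemma exists_finset_pi_disjoint_of_notMem_closure [∀ i, TopologicalSpace (X i)]
    {R : Set (∀ i, X i)} {z : ∀ i, X i} (hz : z ∉ closure R) :
    ∃ (K : Finset I) (U : ∀ i, Set (X i)),
      z ∈ (K : Set I).pi U ∧ Disjoint ((K : Set I).pi U) R := by
  have hRc : Rᶜ ∈ 𝓝 z := by
    rwa [← mem_interior_iff_mem_nhds, interior_compl, mem_compl_iff]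
  rw [nhds_pi, mem_pi'] at hRc
  obtain ⟨K, U, hU, hKU⟩ := hRc
  exact ⟨K, U, fun i _ => mem_of_mem_nhds (hU i), disjoint_compl_left.mono_left hKU⟩

end

theorem stmt_8_general {I : Type*} {X : I → Type*} [∀ i, TopologicalSpace (X i)]
    (G R : Set (∀ i, X i)) (hG : IsOpen G)
    (hGR : ¬ G ⊆ interior (closure R))
    (E : Set I) :
    ∃ F : Finset I, ∀ 𝓑 : Set (Set (∀ i, X i)), 𝓑.Finite →
      (∀ B ∈ 𝓑, IsBasicOpen B ∧ B.Nonempty ∧ B ⊆ R) →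
      restr E '' G ⊆ restr E '' ⋃₀ 𝓑 →
      (((F : Set I) ∩ ⋃ B ∈ 𝓑, bsupp B) \ E).Nonempty := by
  obtain ⟨z, hzG, hzR⟩ := exists_mem_notMem_closure_of_not_subset_interior_closure hG hGR
  obtain ⟨K, U, hzKU, hKU⟩ := exists_finset_pi_disjoint_of_notMem_closure hzR
  refine ⟨K, fun 𝓑 _ h𝓑 hcover => ?_⟩
  obtain ⟨y, ⟨B, hB𝓑, hyB⟩, hyz⟩ := hcover (mem_image_of_mem _ hzG)
  obtain ⟨hB, -, hBR⟩ := h𝓑 B hB𝓑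
  by_contra hempty
  have hK : (K : Set I) ∩ bsupp B ⊆ E := fun i hi => by
    by_contra hiE
    exact hempty ⟨i, ⟨hi.1, mem_biUnion hB𝓑 hi.2⟩, hiE⟩
  obtain ⟨w, hwKU, hwB⟩ :=
    hB.isBasicSet.pi_inter_nonempty hyB hzKU (restr_eq_restr_iff.mp hyz) hK
  exact hKU.notMem_of_mem_left hwKU (hBR hwB)

theorem stmt_8 {I : Type*} {X : I → Type*} [∀ i, TopologicalSpace (X i)]
    [∀ i, Nonempty (X i)]
    (G R : Set (∀ i, X i)) (hG : IsOpen G) (hR : IsOpen R)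
    (hGR : ¬ G ⊆ interior (closure R))
    (E : Set I) (hE : E.Finite) :
    ∃ F : Finset I, ∀ 𝓑 : Set (Set (∀ i, X i)), 𝓑.Finite →
      (∀ B ∈ 𝓑, IsBasicOpen B ∧ B.Nonempty ∧ B ⊆ R) →
      restr E '' G ⊆ restr E '' ⋃₀ 𝓑 →
      (((F : Set I) ∩ ⋃ B ∈ 𝓑, bsupp B) \ E).Nonempty :=
  stmt_8_general G R hG hGR E
end

section
/- Let X be a topological space, 𝒱 a cover of X, and 𝒱₁ a cover that double-star-refines 𝒱 (for each V ∈ 𝒱₁ there is V' ∈ 𝒱 with St(St(V,𝒱₁),𝒱₁) ⊆ V'; in particular St(V,𝒱₁) ⊆ V' for some V' ∈ 𝒱). If 𝓡 is an open refinement of 𝒱₁, then the family of regular open extensions {interior (closure R) : R ∈ 𝓡} refines 𝒱. -/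
/-!
Every open set of an open cover `𝒰` meeting a point of `closure A` must meet `A`, so
`closure A ⊆ St(A, 𝒰)`. Hence for `R ⊆ V ∈ 𝒱₁` we get
`int (cl R) ⊆ cl R ⊆ St(V, 𝒱₁) ⊆ St(St(V, 𝒱₁), 𝒱₁)`, which lies in a member of `𝒱`.
-/

/-- The star of a set `A` with respect to a family `𝒰` of sets:
the union of all members of `𝒰` meeting `A`. -/
def star' {X : Type*} (A : Set X) (𝒰 : Set (Set X)) : Set X :=
  ⋃₀ {U ∈ 𝒰 | (U ∩ A).Nonempty}

section Star

variable {X : Type*} {A B : Set X} {𝒰 : Set (Set X)}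

theorem star'_mono (hAB : A ⊆ B) : star' A 𝒰 ⊆ star' B 𝒰 :=
  Set.sUnion_mono fun _ ⟨hU, hUA⟩ => ⟨hU, hUA.mono (Set.inter_subset_inter_right _ hAB)⟩

theorem star'_subset_sUnion : star' A 𝒰 ⊆ ⋃₀ 𝒰 :=
  Set.sUnion_mono fun _ hU => hU.1

theorem subset_star'_of_subset_sUnion (hA : A ⊆ ⋃₀ 𝒰) : A ⊆ star' A 𝒰 := by
  intro x hx
  obtain ⟨U, hU, hxU⟩ := hA hx
  exact ⟨U, ⟨hU, x, hxU, hx⟩, hxU⟩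

theorem star'_subset_star'_star' : star' A 𝒰 ⊆ star' (star' A 𝒰) 𝒰 :=
  subset_star'_of_subset_sUnion star'_subset_sUnion

theorem closure_subset_star' [TopologicalSpace X] (h𝒰cov : ⋃₀ 𝒰 = Set.univ)
    (h𝒰open : ∀ U ∈ 𝒰, IsOpen U) : closure A ⊆ star' A 𝒰 := by
  intro x hx
  obtain ⟨U, hU, hxU⟩ : x ∈ ⋃₀ 𝒰 := h𝒰cov ▸ Set.mem_univ x
  exact ⟨U, ⟨hU, mem_closure_iff.mp hx U (h𝒰open U hU) hxU⟩, hxU⟩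

end Star

theorem stmt_9_general {X : Type*} [TopologicalSpace X]
    (𝒱 𝒱₁ : Set (Set X))
    (h𝒱₁cov : ⋃₀ 𝒱₁ = Set.univ) (h𝒱₁open : ∀ V ∈ 𝒱₁, IsOpen V)
    (hstar : ∀ V ∈ 𝒱₁, ∃ V' ∈ 𝒱, star' (star' V 𝒱₁) 𝒱₁ ⊆ V')
    (𝓡 : Set (Set X))
    (h𝓡ref : ∀ R ∈ 𝓡, ∃ V ∈ 𝒱₁, R ⊆ V) :
    ∀ R ∈ 𝓡, ∃ V' ∈ 𝒱, interior (closure R) ⊆ V' := by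
  intro R hR
  obtain ⟨V, hV, hRV⟩ := h𝓡ref R hR
  obtain ⟨V', hV', hstarV⟩ := hstar V hV
  refine ⟨V', hV', ?_⟩
  calc interior (closure R) ⊆ closure R := interior_subset
    _ ⊆ star' R 𝒱₁ := closure_subset_star' h𝒱₁cov h𝒱₁open
    _ ⊆ star' V 𝒱₁ := star'_mono hRV
    _ ⊆ star' (star' V 𝒱₁) 𝒱₁ := star'_subset_star'_star'
    _ ⊆ V' := hstarV

theorem stmt_9 {X : Type*} [TopologicalSpace X]
    (𝒱 𝒱₁ : Set (Set X))
    (h𝒱cov : ⋃₀ 𝒱 = Set.univ)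
    (h𝒱₁cov : ⋃₀ 𝒱₁ = Set.univ) (h𝒱₁open : ∀ V ∈ 𝒱₁, IsOpen V)
    (hstar : ∀ V ∈ 𝒱₁, ∃ V' ∈ 𝒱, star' (star' V 𝒱₁) 𝒱₁ ⊆ V')
    (𝓡 : Set (Set X)) (h𝓡open : ∀ R ∈ 𝓡, IsOpen R)
    (h𝓡ref : ∀ R ∈ 𝓡, ∃ V ∈ 𝒱₁, R ⊆ V) :
    ∀ R ∈ 𝓡, ∃ V' ∈ 𝒱, interior (closure R) ⊆ V' :=
  stmt_9_general 𝒱 𝒱₁ h𝒱₁cov h𝒱₁open hstar 𝓡 h𝓡ref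
end

section
/- For the standard sequence of perversities (p n), for every coordinate i and every bound M there exists n such that p n (i) ≥ M; i.e., along the sequence every coordinate tends to infinity. -/
/-- One step in the construction of the standard sequence of perversities:
increment the first coordinate `k` at which two consecutive values agree. -/
noncomputable def pervStep (f : ℕ → ℕ) : ℕ → ℕ :=
  Function.update f (sInf {j | f j = f (j + 1)}) (f (sInf {j | f j = f (j + 1)}) + 1)

/-- The standard sequence of perversities: `stdPerv 0 = 0`, and `stdPerv (n+1)`
is obtained from `stdPerv n` by incrementing the first coordinate at which two
consecutive values agree. -/
noncomputable def stdPerv : ℕ → (ℕ → ℕ)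
  | 0 => fun _ => 0
  | n + 1 => pervStep (stdPerv n)

/-!
Every `stdPerv n` is non-increasing with steps of size at most one. Hence the coordinate
`k` incremented at step `n` satisfies `stdPerv n k + k = stdPerv n 0`, since all steps before
`k` are strict, so `k ≤ stdPerv n 0`. If `stdPerv n 0` stayed below `M` forever, every step
would increment a coordinate below `M`, so the sum of the first `M` coordinates of `stdPerv n`
would be `n`; but this sum is less than `M * M`. Finally `stdPerv n i ≥ stdPerv n 0 - i`.
-/

open Finset

noncomputable def firstFlat (f : ℕ → ℕ) : ℕ := sInf {j | f j = f (j + 1)}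

lemma pervStep_eq_update (f : ℕ → ℕ) :
    pervStep f = Function.update f (firstFlat f) (f (firstFlat f) + 1) := rfl

lemma firstFlat_spec {f : ℕ → ℕ} (h : ∃ j, f j = f (j + 1)) :
    f (firstFlat f) = f (firstFlat f + 1) :=
  Nat.sInf_mem h

lemma apply_ne_apply_succ_of_lt_firstFlat {f : ℕ → ℕ} {j : ℕ} (hj : j < firstFlat f) :
    f j ≠ f (j + 1) :=
  Nat.notMem_of_lt_sInf (s := {j | f j = f (j + 1)}) hj

def IsPerversity (f : ℕ → ℕ) : Prop := ∀ j, f (j + 1) ≤ f j ∧ f j ≤ f (j + 1) + 1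

namespace IsPerversity

variable {f : ℕ → ℕ}

lemma apply_le_apply_zero (hf : IsPerversity f) (j : ℕ) : f j ≤ f 0 := by
  induction j with
  | zero => exact le_rfl
  | succ j ih => exact (hf j).1.trans ih

lemma apply_zero_le_add (hf : IsPerversity f) (j : ℕ) : f 0 ≤ f j + j := by
  induction j with
  | zero => simp
  | succ j ih => have := (hf j).2; omega

lemma apply_add_eq_of_le_firstFlat (hf : IsPerversity f) {j : ℕ} (hj : j ≤ firstFlat f) :
    f j + j = f 0 := by
  induction j with
  | zero => simp
  | succ j ih =>
    have hne := apply_ne_apply_succ_of_lt_firstFlat (f := f) (j := j) (by omega)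
    have := ih (by omega)
    have := hf j
    omega

lemma firstFlat_le_apply_zero (hf : IsPerversity f) : firstFlat f ≤ f 0 := by
  have := hf.apply_add_eq_of_le_firstFlat le_rfl
  omega

lemma pervStep (hf : IsPerversity f) (hflat : ∃ j, f j = f (j + 1)) :
    IsPerversity (pervStep f) := by
  have hk := firstFlat_spec hflat
  intro j
  rw [pervStep_eq_update]
  rcases eq_or_ne j (firstFlat f) with rfl | hjk
  · rw [Function.update_self, Function.update_of_ne (by omega)]
    omega
  rw [Function.update_of_ne hjk]
  rcases eq_or_ne (j + 1) (firstFlat f) with hk1 | hk1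
  · have hne := apply_ne_apply_succ_of_lt_firstFlat (f := f) (j := j) (by omega)
    rw [hk1, Function.update_self, ← hk1]
    have := hf j
    omega
  · rw [Function.update_of_ne hk1]
    exact hf j

end IsPerversity

lemma sum_range_pervStep {f : ℕ → ℕ} {M : ℕ} (hM : firstFlat f < M) :
    ∑ j ∈ range M, pervStep f j = ∑ j ∈ range M, f j + 1 := by
  have hmem : firstFlat f ∈ range M := mem_range.2 hM
  rw [pervStep_eq_update, sum_update_of_mem hmem, ← erase_eq, ← add_sum_erase _ _ hmem]
  ring

lemma stdPerv_succ (n : ℕ) : stdPerv (n + 1) = pervStep (stdPerv n) := rfl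

lemma stdPerv_apply_of_le {n j : ℕ} (hj : n ≤ j) : stdPerv n j = 0 := by
  induction n generalizing j with
  | zero => rfl
  | succ n ih =>
    have hk : firstFlat (stdPerv n) ≤ n :=
      Nat.sInf_le (show stdPerv n n = stdPerv n (n + 1) by rw [ih le_rfl, ih (by omega)])
    rw [stdPerv_succ, pervStep_eq_update, Function.update_of_ne (by omega)]
    exact ih (by omega)

lemma exists_stdPerv_apply_eq_apply_succ (n : ℕ) : ∃ j, stdPerv n j = stdPerv n (j + 1) :=
  ⟨n, by rw [stdPerv_apply_of_le le_rfl, stdPerv_apply_of_le (by omega)]⟩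

lemma isPerversity_stdPerv (n : ℕ) : IsPerversity (stdPerv n) := by
  induction n with
  | zero => intro j; simp [stdPerv]
  | succ n ih => exact ih.pervStep (exists_stdPerv_apply_eq_apply_succ n)

lemma sum_range_stdPerv_of_forall_lt {M : ℕ} (hM : ∀ n, stdPerv n 0 < M) (n : ℕ) :
    ∑ j ∈ range M, stdPerv n j = n := by
  induction n with
  | zero => simp [stdPerv]
  | succ n ih =>
    rw [stdPerv_succ, sum_range_pervStep
      ((isPerversity_stdPerv n).firstFlat_le_apply_zero.trans_lt (hM n)), ih]

lemma exists_le_stdPerv_zero (M : ℕ) : ∃ n, M ≤ stdPerv n 0 := by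
  by_contra! hM
  have hpos : 0 < M := (Nat.zero_le _).trans_lt (hM 0)
  have hlt : ∑ j ∈ range M, stdPerv (M * M) j < ∑ _j ∈ range M, M :=
    sum_lt_sum_of_nonempty (nonempty_range_iff.2 hpos.ne') fun j _ =>
      ((isPerversity_stdPerv _).apply_le_apply_zero j).trans_lt (hM _)
  rw [sum_range_stdPerv_of_forall_lt hM, sum_const, card_range, smul_eq_mul] at hlt
  exact lt_irrefl _ hlt

theorem stmt_13 : ∀ (i M : ℕ), ∃ n, M ≤ stdPerv n i := by
  intro i M
  obtain ⟨n, hn⟩ := exists_le_stdPerv_zero (M + i)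
  have := (isPerversity_stdPerv n).apply_zero_le_add i
  exact ⟨n, by omega⟩
end

section
/- If the set 𝒫 of perversities is a tree (well-founded downwards linearly ordered predecessor sets) under the pointwise partial order, then the perverse product ∏_𝒫 T_i of trees T_i is again a tree: it has a unique minimum, and each element has a finite linearly ordered set of predecessors. -/
/-!
An element `y < x` of the perverse product is determined by its vector of levels: below `x`
every coordinate tree is a chain, and in a chain an element is fixed by its level. Moreover the
coordinatewise order on `{y | y ≤ x}` is exactly the pointwise order on level vectors. So
`y ↦ (level (y i))ᵢ` embeds `{y | y < x}` as an order into the predecessors of the perversity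
of `x`, which form a finite chain because `𝒫` is a tree. The root is the constant family of
roots, whose perversity is zero.
-/

open Set

section Level

variable {P : Type*} [PartialOrder P] {x y z : P}

noncomputable def level (x : P) : ℕ := (Iio x).ncard

theorem level_eq_zero_of_isBot (hx : IsBot x) : level x = 0 := by
  simp [level, Iio_eq_empty_iff.2 hx.isMin]

theorem level_le_level (hx : (Iio x).Finite) (h : y ≤ x) : level y ≤ level x :=
  ncard_le_ncard (Iio_subset_Iio h) hx

theorem level_lt_level (hx : (Iio x).Finite) (h : y < x) : level y < level x :=
  ncard_lt_ncard (Iio_ssubset_Iio h) hx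

theorem eq_of_le_of_level_le (hx : (Iio x).Finite) (h : y ≤ x) (hl : level x ≤ level y) :
    y = x :=
  h.eq_of_not_lt fun hlt => (level_lt_level hx hlt).not_ge hl

theorem le_or_le_of_le_of_le (hx : IsChain (· ≤ ·) (Iio x)) (hy : y ≤ x) (hz : z ≤ x) :
    y ≤ z ∨ z ≤ y := by
  have hchain : IsChain (· ≤ ·) (Iic x) :=
    Iio_insert (a := x) ▸ hx.insert fun _ hb _ => Or.inr (le_of_lt hb)
  exact hchain.total hy hz

theorem le_of_level_le (hy : (Iio y).Finite) (hx : IsChain (· ≤ ·) (Iio x))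
    (hyx : y ≤ x) (hzx : z ≤ x) (hl : level y ≤ level z) : y ≤ z :=
  (le_or_le_of_le_of_le hx hyx hzx).elim id fun hzy => (eq_of_le_of_level_le hy hzy hl).ge

end Level

section Levels

variable {ι : Type*} {T : ι → Type*} [∀ i, PartialOrder (T i)] {x y z : ∀ i, T i}

noncomputable def levels (x : ∀ i, T i) : ι → ℕ := fun i => level (x i)

theorem levels_le_levels (hfin : ∀ i (a : T i), (Iio a).Finite) (h : y ≤ x) :
    levels y ≤ levels x :=
  fun i => level_le_level (hfin i (x i)) (h i)

theorem le_of_levels_le (htree : ∀ i (a : T i), (Iio a).Finite ∧ IsChain (· ≤ ·) (Iio a))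
    (hyx : y ≤ x) (hzx : z ≤ x) (hl : levels y ≤ levels z) : y ≤ z :=
  fun i => le_of_level_le (htree i (y i)).1 (htree i (x i)).2 (hyx i) (hzx i) (hl i)

theorem levels_lt_levels (htree : ∀ i (a : T i), (Iio a).Finite ∧ IsChain (· ≤ ·) (Iio a))
    (h : y < x) : levels y < levels x :=
  (levels_le_levels (fun i a => (htree i a).1) h.le).lt_of_not_ge fun hl =>
    h.not_ge (le_of_levels_le htree le_rfl h.le hl)

end Levels

theorem Set.Finite.isChain_of_mapsTo {α β : Type*} [PartialOrder α] [Preorder β]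
    {f : α → β} {s : Set α} {t : Set β} (hmaps : MapsTo f s t)
    (hreflect : ∀ a ∈ s, ∀ b ∈ s, f a ≤ f b → a ≤ b) (ht : t.Finite ∧ IsChain (· ≤ ·) t) :
    s.Finite ∧ IsChain (· ≤ ·) s := by
  have hinj : InjOn f s := fun a ha b hb hab =>
    le_antisymm (hreflect a ha b hb hab.le) (hreflect b hb a ha hab.ge)
  refine ⟨ht.1.of_injOn hmaps hinj, fun a ha b hb _ => ?_⟩
  exact (ht.2.total (hmaps ha) (hmaps hb)).imp (hreflect a ha b hb) (hreflect b hb a ha)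

theorem stmt_15_general (T : ℕ → Type*) [∀ i, PartialOrder (T i)]
    (root : ∀ i, T i) (hroot : ∀ (i : ℕ) (x : T i), root i ≤ x)
    (htree : ∀ (i : ℕ) (x : T i), {y | y < x}.Finite ∧ IsChain (· ≤ ·) {y | y < x})
    (lv : ∀ i, T i → ℕ) (hlv : ∀ (i : ℕ) (x : T i), lv i x = Set.ncard {y | y < x})
    (Pv : Set (ℕ → ℕ))
    (hzero : (fun _ => 0) ∈ Pv)
    (hPtree : ∀ p ∈ Pv, {q ∈ Pv | q < p}.Finite ∧ IsChain (· ≤ ·) {q ∈ Pv | q < p}) :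
    (∃ r : {x : ∀ i, T i // ∃ p ∈ Pv, ∀ i, lv i (x i) = p i},
        ∀ x : {x : ∀ i, T i // ∃ p ∈ Pv, ∀ i, lv i (x i) = p i}, r ≤ x) ∧
    (∀ x : {x : ∀ i, T i // ∃ p ∈ Pv, ∀ i, lv i (x i) = p i},
        {y | y < x}.Finite ∧ IsChain (· ≤ ·) {y | y < x}) := by
  obtain rfl : lv = fun _ => level := funext₂ hlv
  refine ⟨⟨⟨root, _, hzero, fun i => level_eq_zero_of_isBot (hroot i)⟩,
    fun x i => hroot i (x.1 i)⟩, fun x => ?_⟩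
  obtain ⟨p, hp, hxp⟩ := x.2
  obtain rfl : levels x.1 = p := funext hxp
  refine Set.Finite.isChain_of_mapsTo (f := fun y => levels y.1) (fun y (hy : y < x) => ?_)
    (fun y hy z hz hl => le_of_levels_le htree (le_of_lt hy) (le_of_lt hz) hl) (hPtree _ hp)
  obtain ⟨q, hq, hyq⟩ := y.2
  obtain rfl : levels y.1 = q := funext hyq
  exact ⟨hq, levels_lt_levels htree hy⟩

theorem stmt_15 (T : ℕ → Type*) [∀ i, PartialOrder (T i)]
    (root : ∀ i, T i) (hroot : ∀ (i : ℕ) (x : T i), root i ≤ x)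
    (htree : ∀ (i : ℕ) (x : T i), {y | y < x}.Finite ∧ IsChain (· ≤ ·) {y | y < x})
    (lv : ∀ i, T i → ℕ) (hlv : ∀ (i : ℕ) (x : T i), lv i x = Set.ncard {y | y < x})
    (Pv : Set (ℕ → ℕ))
    (hperv : ∀ p ∈ Pv, (∀ j, p (j + 1) ≤ p j) ∧ ∃ N, ∀ j ≥ N, p j = 0)
    (hzero : (fun _ => 0) ∈ Pv)
    (hPtree : ∀ p ∈ Pv, {q ∈ Pv | q < p}.Finite ∧ IsChain (· ≤ ·) {q ∈ Pv | q < p}) :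
    (∃ r : {x : ∀ i, T i // ∃ p ∈ Pv, ∀ i, lv i (x i) = p i},
        ∀ x : {x : ∀ i, T i // ∃ p ∈ Pv, ∀ i, lv i (x i) = p i}, r ≤ x) ∧
    (∀ x : {x : ∀ i, T i // ∃ p ∈ Pv, ∀ i, lv i (x i) = p i},
        {y | y < x}.Finite ∧ IsChain (· ≤ ·) {y | y < x}) :=
  stmt_15_general T root hroot htree lv hlv Pv hzero hPtree
end

section
/- Let X be a regular topological space with a stationary winning strategy φ (as in the game G(X)), and let (P_n) be a decreasing sequence of nonempty subsets of X such that P_{n+1} ⊆ φ(P_n) for all n. Then K = ⋂_n closure(P_n) is nonempty and compact. -/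
/-- A *stationary winning strategy* for Player II in the game `G(X)`:
`φ` assigns to each nonempty `S ⊆ X` a nonempty relatively open subset
`φ S ⊆ S`, and for every play `S₁ ⊇ φ S₁ ⊇ S₂ ⊇ φ S₂ ⊇ ⋯` (where
`S (n+1) ⊆ φ (S n)` is nonempty), every proper filter containing all the
sets `φ (S n)` has a cluster point. -/
def IsStationaryWinning {X : Type*} [TopologicalSpace X] (φ : Set X → Set X) : Prop :=
  (∀ S : Set X, S.Nonempty →
      (φ S).Nonempty ∧ φ S ⊆ S ∧ ∃ U : Set X, IsOpen U ∧ φ S = U ∩ S) ∧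
  (∀ S : ℕ → Set X, (∀ n, (S n).Nonempty) → (∀ n, S (n + 1) ⊆ φ (S n)) →
    ∀ f : Filter X, f ≠ ⊥ → (∀ n, φ (S n) ∈ f) → ∃ x, ClusterPt x f)

/-!
The play `P` is antitone, so `⋂ n, closure (P n)` is the set of cluster points of the filter
`F = ⨅ n, 𝓟 (P n)`, and the winning condition says that every proper filter finer than `F` has a
cluster point. In a regular space this makes the cluster set of `F` compact: for a proper filter
`f` on it, `F ⊓ f.lift 𝓝ˢ` is still proper (points of `f`'s members are cluster points of `F`),
and by regularity each of its cluster points is a cluster point of `f`.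
-/

open Filter Topology

section

variable {X : Type*} [TopologicalSpace X]

theorem ClusterPt.of_le_lift_nhdsSet [RegularSpace X] {x : X} {f h : Filter X}
    (hx : ClusterPt x h) (hle : h ≤ f.lift 𝓝ˢ) : ClusterPt x f := by
  refine clusterPt_iff_forall_mem_closure.2 fun A hA => ?_
  by_contra hxA
  have hdisj : Disjoint (𝓝ˢ A) (𝓝 x) := disjoint_nhdsSet_nhds.2 hxA
  exact hx.ne (hdisj.symm.mono_right (hle.trans (lift_le hA le_rfl))).eq_bot

theorem isCompact_setOf_clusterPt [RegularSpace X] {F : Filter X}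
    (hF : ∀ h : Filter X, h.NeBot → h ≤ F → ∃ x, ClusterPt x h) :
    IsCompact {x | ClusterPt x F} := by
  intro f _ hfK
  have hproper : (F ⊓ f.lift 𝓝ˢ).NeBot := by
    refine inf_neBot_iff.2 fun s hs t ht => ?_
    obtain ⟨A, hA, htA⟩ := (mem_lift_sets monotone_nhdsSet).1 ht
    obtain ⟨y, hyA, hyK⟩ := f.nonempty_of_mem (inter_mem hA (le_principal_iff.1 hfK))
    exact (clusterPt_iff_nonempty.1 hyK (mem_nhdsSet_iff_forall.1 htA y hyA) hs).mono
      fun _ => And.symm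
  obtain ⟨x, hx⟩ := hF _ hproper inf_le_left
  exact ⟨x, hx.mono inf_le_left, hx.of_le_lift_nhdsSet inf_le_right⟩

theorem clusterPt_iInf_principal_iff {s : ℕ → Set X} (hs : Antitone s) {x : X} :
    ClusterPt x (⨅ n, 𝓟 (s n)) ↔ ∀ n, x ∈ closure (s n) := by
  simpa using (hasBasis_iInf_principal hs.directed_ge).clusterPt_iff_forall_mem_closure

end

namespace IsStationaryWinning

variable {X : Type*} [TopologicalSpace X] {φ : Set X → Set X} {P : ℕ → Set X}

theorem antitone_play (hφ : IsStationaryWinning φ) (hne : ∀ n, (P n).Nonempty)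
    (hdec : ∀ n, P (n + 1) ⊆ φ (P n)) : Antitone P :=
  antitone_nat_of_succ_le fun n => (hdec n).trans (hφ.1 _ (hne n)).2.1

theorem exists_clusterPt_of_le (hφ : IsStationaryWinning φ) (hne : ∀ n, (P n).Nonempty)
    (hdec : ∀ n, P (n + 1) ⊆ φ (P n)) (h : Filter X) [h.NeBot] (hle : h ≤ ⨅ n, 𝓟 (P n)) :
    ∃ x, ClusterPt x h :=
  hφ.2 P hne hdec h NeBot.ne' fun n =>
    mem_of_superset (le_principal_iff.1 (hle.trans (iInf_le _ (n + 1)))) (hdec n)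

end IsStationaryWinning

theorem stmt_18 {X : Type*} [TopologicalSpace X] [RegularSpace X]
    (φ : Set X → Set X) (hφ : IsStationaryWinning φ)
    (P : ℕ → Set X) (hne : ∀ n, (P n).Nonempty)
    (hdec : ∀ n, P (n + 1) ⊆ φ (P n)) :
    (⋂ n, closure (P n)).Nonempty ∧ IsCompact (⋂ n, closure (P n)) := by
  have hanti : Antitone P := hφ.antitone_play hne hdec
  have hK : ⋂ n, closure (P n) = {x | ClusterPt x (⨅ n, 𝓟 (P n))} := by
    ext x
    simp [clusterPt_iInf_principal_iff hanti]
  have : (⨅ n, 𝓟 (P n)).NeBot :=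
    (hasBasis_iInf_principal hanti.directed_ge).neBot_iff.2 fun _ => hne _
  rw [hK]
  exact ⟨hφ.exists_clusterPt_of_le hne hdec _ le_rfl,
    isCompact_setOf_clusterPt fun h _ hle => hφ.exists_clusterPt_of_le hne hdec h hle⟩
end
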